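/- arXiv:1209.1648 — 2 statements merged into one kernel-verified Lean document; each statement's English description precedes it below -/
import Mathlib

section
/- Fix ε > 0 and a sequence τ_n → 0⁺, and for each n let x^{ε,τ_n} be a discretized solution with step τ_n and common initial datum x₀. Then there exist a subsequence (n_k) and a function x^ε : [0,T] → ℝ^d of bounded variation such that x^{ε,τ_{n_k}}(t) → x^ε(t) for every t ∈ [0,T], and Diss_Ψ(x^ε;[0,T]) ≤ E(0,x₀)·e^{λT}. -/
open Filter MeasureTheory Set
open scoped Topology NNReal

section Setup

variable {X : Type*} [NormedAddCommGroup X] [NormedSpace ℝ X]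

/-- The set of partition sums defining the `Ψ`-dissipation of `u` on `[a,b]`:
sums `∑ Ψ(u(s_i) − u(s_{i−1}))` over finite strictly increasing partitions
`a = s₀ < s₁ < ⋯ < s_n = b`. -/
def dissSums (Ψ : X → ℝ) (u : ℝ → X) (a b : ℝ) : Set ℝ :=
  { S | ∃ (n : ℕ) (σ : Fin (n + 1) → ℝ), StrictMono σ ∧ σ 0 = a ∧ σ (Fin.last n) = b ∧
      S = ∑ i : Fin n, Ψ (u (σ i.succ) - u (σ i.castSucc)) }

/-- The `Ψ`-dissipation `Diss_Ψ(u;[a,b])`. -/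
noncomputable def dissTV (Ψ : X → ℝ) (u : ℝ → X) (a b : ℝ) : ℝ :=
  sSup (dissSums Ψ u a b)

/-- The subdifferential `∂Ψ(0) = {η : ⟨η,v⟩ ≤ Ψ(v) for all v}`. -/
def subdiffZero (Ψ : X → ℝ) : Set (X →L[ℝ] ℝ) :=
  { η | ∀ v, η v ≤ Ψ v }

/-- `inf_{η ∈ ∂Ψ(0)} ‖ξ + η‖_*`, where `‖·‖_*` is the dual (operator) norm. -/
noncomputable def distToSubdiff (Ψ : X → ℝ) (ξ : X →L[ℝ] ℝ) : ℝ :=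
  sInf ((fun η => ‖ξ + η‖) '' subdiffZero Ψ)

/-- The cost `Δ_new(t;a,b)`: infimum over Lipschitz paths `γ : [0,1] → X` with
`γ(0)=a`, `γ(1)=b` of `∫₀¹ Ψ(γ'(s)) + (inf_{z∈∂Ψ(0)} ‖D_xE(t,γ(s))+z‖_*)·‖γ'(s)‖ ds`. -/
noncomputable def deltaNew (DE : ℝ → X → X →L[ℝ] ℝ) (Ψ : X → ℝ) (t : ℝ) (a b : X) : ℝ :=
  sInf { c | ∃ (K : ℝ≥0) (γ : ℝ → X), LipschitzOnWith K γ (Icc 0 1) ∧ γ 0 = a ∧ γ 1 = b ∧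
      c = ∫ s in (0:ℝ)..1, (Ψ (deriv γ s) + distToSubdiff Ψ (DE t (γ s)) * ‖deriv γ s‖) }

/-- The new dissipation `Diss_new(u;[t₁,t₂])`, with prescribed one-sided limit
functions `uL`, `uR`, summing over the jump set the corrections `Δ_new − Ψ`. -/
noncomputable def dissNew (DE : ℝ → X → X →L[ℝ] ℝ) (Ψ : X → ℝ)
    (u uL uR : ℝ → X) (t₁ t₂ : ℝ) : ℝ :=
  dissTV Ψ u t₁ t₂
    + ∑' t : ({ s | ¬ ContinuousAt u s } ∩ Ioo t₁ t₂ : Set ℝ),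
        (deltaNew DE Ψ (t : ℝ) (uL (t : ℝ)) (u (t : ℝ)) +
          deltaNew DE Ψ (t : ℝ) (u (t : ℝ)) (uR (t : ℝ))
          - Ψ (u (t : ℝ) - uL (t : ℝ)) - Ψ (uR (t : ℝ) - u (t : ℝ)))
    + (deltaNew DE Ψ t₁ (u t₁) (uR t₁) - Ψ (uR t₁ - u t₁))
    + (deltaNew DE Ψ t₂ (uL t₂) (u t₂) - Ψ (u t₂ - uL t₂))

/-- `pts` is a discretized solution with initial datum `x₀`, neighborhood size `ε`,
time-step `τ` and `N` steps: `pts 0 = x₀` and each `pts i` minimizes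
`x ↦ E(iτ, x) + Ψ(x − pts (i−1))` over the closed ball of radius `ε` around `pts (i−1)`. -/
def IsDiscreteSol (E : ℝ → X → ℝ) (Ψ : X → ℝ) (x₀ : X) (ε τ : ℝ) (N : ℕ)
    (pts : ℕ → X) : Prop :=
  pts 0 = x₀ ∧ ∀ i : ℕ, 1 ≤ i → i ≤ N →
    ‖pts i - pts (i - 1)‖ ≤ ε ∧
    ∀ x : X, ‖x - pts (i - 1)‖ ≤ ε →
      E ((i : ℝ) * τ) (pts i) + Ψ (pts i - pts (i - 1)) ≤
        E ((i : ℝ) * τ) x + Ψ (x - pts (i - 1))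

/-- The piecewise-constant interpolant `x^{ε,τ}`: equal to `pts (i−1)` on
`[(i−1)τ, iτ)` for `i = 1,…,N`, and to `pts N` on `[Nτ, T]`. -/
noncomputable def discInterp (pts : ℕ → X) (τ : ℝ) (N : ℕ) (t : ℝ) : X :=
  pts (min N ⌊t / τ⌋₊)

end Setup

/-!
Testing the minimality of each step against the previous point and bounding the growth of `E`
in time by Grönwall's inequality gives the discrete energy–dissipation estimate: every scheme
dissipates at most `E(0,x₀)·e^{λT}`. Since `Ψ` is coercive, the increments of the interpolants
are dominated by a uniformly bounded monotone function of time (the dissipation accumulated up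
to `t`), so a Helly-type selection argument extracts a pointwise convergent subsequence. Each
partition sum is continuous under pointwise convergence, so the dissipation bound passes to the
limit.
-/

section Sublinear

variable {X : Type*} [NormedAddCommGroup X] [NormedSpace ℝ X] {Ψ : X → ℝ}

theorem map_zero_of_posHomogeneous (hΨhom : ∀ c : ℝ, 0 ≤ c → ∀ v : X, Ψ (c • v) = c * Ψ v) :
    Ψ 0 = 0 := by
  simpa using hΨhom 0 le_rfl 0

theorem map_add_le_of_convexOn_of_posHomogeneous (hΨconv : ConvexOn ℝ univ Ψ)
    (hΨhom : ∀ c : ℝ, 0 ≤ c → ∀ v : X, Ψ (c • v) = c * Ψ v) (u v : X) :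
    Ψ (u + v) ≤ Ψ u + Ψ v := by
  have h := hΨconv.2 (mem_univ u) (mem_univ v) (by norm_num : (0 : ℝ) ≤ 1 / 2)
    (by norm_num : (0 : ℝ) ≤ 1 / 2) (by norm_num)
  rw [← smul_add, hΨhom _ (by norm_num), smul_eq_mul, smul_eq_mul] at h
  linarith

theorem exists_pos_mul_norm_le_of_convexOn [FiniteDimensional ℝ X] (hΨconv : ConvexOn ℝ univ Ψ)
    (hΨhom : ∀ c : ℝ, 0 ≤ c → ∀ v : X, Ψ (c • v) = c * Ψ v) (hΨpos : ∀ v : X, v ≠ 0 → 0 < Ψ v) :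
    ∃ c > 0, ∀ v : X, c * ‖v‖ ≤ Ψ v := by
  rcases subsingleton_or_nontrivial X with hX | hX
  · exact ⟨1, one_pos, fun v => by simp [Subsingleton.elim v 0, map_zero_of_posHomogeneous hΨhom]⟩
  obtain ⟨v₀, hv₀, hmin⟩ := (isCompact_sphere (0 : X) 1).exists_isMinOn
    (NormedSpace.sphere_nonempty.2 zero_le_one)
    ((hΨconv.continuousOn isOpen_univ).mono (subset_univ _))
  refine ⟨Ψ v₀, hΨpos v₀ (ne_zero_of_mem_unit_sphere ⟨v₀, hv₀⟩), fun v => ?_⟩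
  rcases eq_or_ne v 0 with rfl | hv
  · simp [map_zero_of_posHomogeneous hΨhom]
  have hunit : ‖v‖⁻¹ • v ∈ Metric.sphere (0 : X) 1 := by
    rw [mem_sphere_zero_iff_norm, norm_smul, norm_inv, norm_norm,
      inv_mul_cancel₀ (norm_ne_zero_iff.2 hv)]
  calc Ψ v₀ * ‖v‖ ≤ Ψ (‖v‖⁻¹ • v) * ‖v‖ :=
        mul_le_mul_of_nonneg_right (hmin hunit) (norm_nonneg v)
    _ = Ψ v := by
        rw [hΨhom _ (inv_nonneg.2 (norm_nonneg v)), mul_comm, ← mul_assoc,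
          mul_inv_cancel₀ (norm_ne_zero_iff.2 hv), one_mul]

theorem map_sub_le_sum_Ico (hΨconv : ConvexOn ℝ univ Ψ)
    (hΨhom : ∀ c : ℝ, 0 ≤ c → ∀ v : X, Ψ (c • v) = c * Ψ v) (x : ℕ → X) {a b : ℕ} (hab : a ≤ b) :
    Ψ (x b - x a) ≤ ∑ i ∈ Finset.Ico a b, Ψ (x (i + 1) - x i) := by
  rw [← Finset.sum_Ico_sub x hab]
  exact Finset.le_sum_of_subadditive Ψ (map_zero_of_posHomogeneous hΨhom).le
    (map_add_le_of_convexOn_of_posHomogeneous hΨconv hΨhom) _ _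

end Sublinear

theorem le_mul_exp_of_hasDerivWithinAt {f f' : ℝ → ℝ} {K a b : ℝ}
    (hf : ∀ t ∈ Icc a b, HasDerivWithinAt f (f' t) (Icc a b) t)
    (bound : ∀ t ∈ Icc a b, f' t ≤ K * f t) :
    ∀ t ∈ Icc a b, f t ≤ f a * Real.exp (K * (t - a)) := by
  intro t ht
  have := le_gronwallBound_of_liminf_deriv_right_le (f' := f') (δ := f a) (K := K) (ε := 0)
    (fun s hs => (hf s hs).continuousWithinAt)
    (fun s hs r hr => ((hf s (Ico_subset_Icc_self hs)).mono_of_mem_nhdsWithin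
      (Icc_mem_nhdsGE_of_mem hs)).liminf_right_slope_le hr)
    le_rfl (fun s hs => by simpa using bound s (Ico_subset_Icc_self hs)) t ht
  rwa [gronwallBound_ε0] at this

theorem add_sum_le_pow_mul {e d : ℕ → ℝ} {r : ℝ} (hr : 1 ≤ r) (hd : ∀ i, 0 ≤ d i) {n : ℕ}
    (h : ∀ j < n, e (j + 1) + d j ≤ r * e j) : e n + ∑ i ∈ Finset.range n, d i ≤ r ^ n * e 0 := by
  induction n with
  | zero => simp
  | succ n ih =>
    have hsum : 0 ≤ ∑ i ∈ Finset.range n, d i := Finset.sum_nonneg fun i _ => hd i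
    calc e (n + 1) + ∑ i ∈ Finset.range (n + 1), d i
        = (e (n + 1) + d n) + ∑ i ∈ Finset.range n, d i := by rw [Finset.sum_range_succ]; ring
      _ ≤ r * (e n + ∑ i ∈ Finset.range n, d i) := by
          nlinarith [h n (Nat.lt_succ_self n)]
      _ ≤ r * (r ^ n * e 0) :=
          mul_le_mul_of_nonneg_left (ih fun j hj => h j (hj.trans (Nat.lt_succ_self n)))
            (by linarith)
      _ = r ^ (n + 1) * e 0 := by ring

theorem Fin.sum_succ_sub_castSucc {M : Type*} [AddCommGroup M] {n : ℕ} (g : Fin (n + 1) → M) :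
    ∑ i : Fin n, (g i.succ - g i.castSucc) = g (Fin.last n) - g 0 := by
  induction n with
  | zero => simp
  | succ n ih =>
    rw [Fin.sum_univ_castSucc]
    have := ih fun i => g i.castSucc
    simp only [Fin.succ_castSucc, Fin.castSucc_zero] at this ⊢
    rw [this, Fin.succ_last]
    abel

section Dissipation

variable {X : Type*} [NormedAddCommGroup X]

theorem le_sub_of_mem_dissSums {Ψ : X → ℝ} {u : ℝ → X} {V : ℝ → ℝ}
    (hΨV : ∀ s t, s ≤ t → Ψ (u t - u s) ≤ V t - V s) {a b S : ℝ} (hS : S ∈ dissSums Ψ u a b) :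
    S ≤ V b - V a := by
  obtain ⟨n, σ, hσ, rfl, rfl, rfl⟩ := hS
  calc ∑ i : Fin n, Ψ (u (σ i.succ) - u (σ i.castSucc))
      ≤ ∑ i : Fin n, (V (σ i.succ) - V (σ i.castSucc)) :=
        Finset.sum_le_sum fun i _ => hΨV _ _ (hσ.monotone (Fin.castSucc_le_succ i))
    _ = V (σ (Fin.last n)) - V (σ 0) := Fin.sum_succ_sub_castSucc (V ∘ σ)

theorem le_of_mem_dissSums_of_tendsto {Ψ : X → ℝ} (hΨ : Continuous Ψ) {u : ℕ → ℝ → X}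
    {v : ℝ → X} {a b C : ℝ} (huv : ∀ t ∈ Icc a b, Tendsto (fun k => u k t) atTop (𝓝 (v t)))
    (hC : ∀ k, ∀ S ∈ dissSums Ψ (u k) a b, S ≤ C) : ∀ S ∈ dissSums Ψ v a b, S ≤ C := by
  rintro _ ⟨n, σ, hσ, rfl, rfl, rfl⟩
  have hσ_mem : ∀ i, σ i ∈ Icc (σ 0) (σ (Fin.last n)) := fun i =>
    ⟨hσ.monotone (Fin.zero_le i), hσ.monotone (Fin.le_last i)⟩
  exact le_of_tendsto'
    (tendsto_finsetSum _ fun i _ =>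
      (hΨ.tendsto _).comp ((huv _ (hσ_mem _)).sub (huv _ (hσ_mem _))))
    fun k => hC k _ ⟨n, σ, hσ, rfl, rfl, rfl⟩

theorem bddAbove_dissSums_of_le_mul {Φ Ψ : X → ℝ} {C : ℝ} (hC : 0 ≤ C) (hΦΨ : ∀ v, Φ v ≤ C * Ψ v)
    {u : ℝ → X} {a b M : ℝ} (hΨ : ∀ S ∈ dissSums Ψ u a b, S ≤ M) :
    BddAbove (dissSums Φ u a b) := by
  refine ⟨C * M, ?_⟩
  rintro _ ⟨n, σ, hσ, h0, hn, rfl⟩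
  calc ∑ i : Fin n, Φ (u (σ i.succ) - u (σ i.castSucc))
      ≤ C * ∑ i : Fin n, Ψ (u (σ i.succ) - u (σ i.castSucc)) := by
        rw [Finset.mul_sum]; exact Finset.sum_le_sum fun i _ => hΦΨ _
    _ ≤ C * M := mul_le_mul_of_nonneg_left (hΨ _ ⟨n, σ, hσ, h0, hn, rfl⟩) hC

end Dissipation

theorem exists_subseq_tendsto_of_mem_isCompact {ι Y : Type*} [Countable ι] [MetricSpace Y]
    {K : Set Y} (hK : IsCompact K) {f : ℕ → ι → Y} (hf : ∀ n i, f n i ∈ K) :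
    ∃ φ : ℕ → ℕ, StrictMono φ ∧ ∃ g : ι → Y, ∀ i, Tendsto (fun k => f (φ k) i) atTop (𝓝 (g i)) := by
  obtain ⟨g, -, φ, hφ, hlim⟩ :=
    (isCompact_univ_pi fun _ : ι => hK).tendsto_subseq fun n => mem_univ_pi.2 (hf n)
  exact ⟨φ, hφ, g, tendsto_pi_nhds.1 hlim⟩

theorem exists_subseq_tendsto_of_monotone {V : ℕ → ℝ → ℝ} (hV : ∀ n, Monotone (V n)) {m M : ℝ}
    (hVM : ∀ n t, V n t ∈ Icc m M) :
    ∃ φ : ℕ → ℕ, StrictMono φ ∧ ∃ v : ℝ → ℝ, ∀ t, Tendsto (fun k => V (φ k) t) atTop (𝓝 (v t)) := by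
  obtain ⟨φ₁, hφ₁, w, hw⟩ := exists_subseq_tendsto_of_mem_isCompact isCompact_Icc
    (f := fun n (q : ℚ) => V n q) fun n q => hVM n q
  have hw_le : ∀ q, w q ≤ M := fun q =>
    le_of_tendsto' (hw q) fun k => (hVM _ _).2
  -- `h t` is the left limit of `w` at `t`; `V (φ₁ k)` converges to it where it is continuous.
  let h : ℝ → ℝ := fun t => ⨆ q : {q : ℚ // (q : ℝ) < t}, w q
  have : ∀ t, Nonempty {q : ℚ // (q : ℝ) < t} := fun t =>
    let ⟨q, hq⟩ := exists_rat_lt t; ⟨⟨q, hq⟩⟩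
  have hbdd : ∀ t, BddAbove (range fun q : {q : ℚ // (q : ℝ) < t} => w q) := fun t =>
    ⟨M, forall_mem_range.2 fun q => hw_le q⟩
  have hh_mono : Monotone h := fun s t hst =>
    ciSup_le fun q => le_ciSup_of_le (hbdd t) ⟨q, q.2.trans_le hst⟩ le_rfl
  have hlim_h : ∀ t, ContinuousAt h t → Tendsto (fun k => V (φ₁ k) t) atTop (𝓝 (h t)) := by
    intro t ht
    refine tendsto_order.2 ⟨fun a ha => ?_, fun b hb => ?_⟩
    · obtain ⟨q, hq⟩ := exists_lt_of_lt_ciSup ha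
      filter_upwards [(hw q).eventually (lt_mem_nhds hq)] with k hk
      exact hk.trans_le (hV _ q.2.le)
    · obtain ⟨s, hs, hts⟩ := (((ht.eventually (gt_mem_nhds hb)).filter_mono
        nhdsWithin_le_nhds).and self_mem_nhdsWithin).exists (f := 𝓝[>] t)
      obtain ⟨q, htq, hqs⟩ := exists_rat_btwn hts
      have hwq : w q < b := (le_ciSup (hbdd s) ⟨q, hqs⟩).trans_lt hs
      filter_upwards [(hw q).eventually (gt_mem_nhds hwq)] with k hk
      exact (hV _ htq.le).trans_lt hk
  let B := {t | ¬ContinuousAt h t}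
  have : Countable B := hh_mono.countable_not_continuousAt.to_subtype
  obtain ⟨φ₂, hφ₂, u, hu⟩ := exists_subseq_tendsto_of_mem_isCompact isCompact_Icc
    (f := fun n (t : B) => V (φ₁ n) t) fun n t => hVM _ _
  classical
  refine ⟨φ₁ ∘ φ₂, hφ₁.comp hφ₂, fun t => if ht : t ∈ B then u ⟨t, ht⟩ else h t, fun t => ?_⟩
  dsimp only
  split_ifs with ht
  · exact hu ⟨t, ht⟩
  · exact (hlim_h t (not_not.1 ht)).comp hφ₂.tendsto_atTop

theorem dist_le_of_dist_le_sub {Y : Type*} [PseudoMetricSpace Y] {f : ℝ → Y} {V : ℝ → ℝ}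
    {m M : ℝ} (hV : ∀ t, V t ∈ Icc m M) (hfV : ∀ s t, s ≤ t → dist (f s) (f t) ≤ V t - V s)
    (s t : ℝ) : dist (f s) (f t) ≤ M - m := by
  rcases le_total s t with hst | hts
  · linarith [hfV s t hst, (hV t).2, (hV s).1]
  · rw [dist_comm]
    linarith [hfV t s hts, (hV s).2, (hV t).1]

theorem exists_subseq_tendsto_of_dist_le_sub {Y : Type*} [MetricSpace Y] {K : Set Y}
    (hK : IsCompact K) {f : ℕ → ℝ → Y} (hfK : ∀ n t, f n t ∈ K) {V : ℕ → ℝ → ℝ}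
    (hV : ∀ n, Monotone (V n)) {m M : ℝ} (hVM : ∀ n t, V n t ∈ Icc m M)
    (hfV : ∀ n s t, s ≤ t → dist (f n s) (f n t) ≤ V n t - V n s) :
    ∃ φ : ℕ → ℕ, StrictMono φ ∧ ∃ g : ℝ → Y, ∀ t, Tendsto (fun k => f (φ k) t) atTop (𝓝 (g t)) := by
  obtain ⟨φ₁, hφ₁, v, hv⟩ := exists_subseq_tendsto_of_monotone hV hVM
  have hv_mono : Monotone v := fun s t hst =>
    le_of_tendsto_of_tendsto' (hv s) (hv t) fun k => hV _ hst
  let S := range ((↑) : ℚ → ℝ) ∪ {t | ¬ContinuousAt v t}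
  have : Countable S := ((countable_range _).union hv_mono.countable_not_continuousAt).to_subtype
  obtain ⟨φ₂, hφ₂, g, hg⟩ := exists_subseq_tendsto_of_mem_isCompact hK
    (f := fun n (t : S) => f (φ₁ n) t) fun n t => hfK _ _
  suffices ∀ t, ∃ y, Tendsto (fun k => f (φ₁ (φ₂ k)) t) atTop (𝓝 y) by
    choose g hg using this
    exact ⟨φ₁ ∘ φ₂, hφ₁.comp hφ₂, g, hg⟩
  intro t
  by_cases htS : t ∈ S
  · exact ⟨g ⟨t, htS⟩, hg ⟨t, htS⟩⟩
  have hvt : ContinuousAt v t := not_not.1 fun h => htS (Or.inr h)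
  suffices CauchySeq fun k => f (φ₁ (φ₂ k)) t by
    obtain ⟨y, -, hy⟩ := cauchySeq_tendsto_of_isComplete hK.isComplete (fun k => hfK _ _) this
    exact ⟨y, hy⟩
  -- For rational `q > t`, `dist (f k t) (f k q) ≤ V k q - V k t → v q - v t`, which is small
  -- for `q` close to `t` since `v` is continuous at `t`.
  refine Metric.cauchySeq_iff.2 fun ε hε => ?_
  obtain ⟨δ, hδ, hvδ⟩ := Metric.continuousAt_iff.1 hvt (ε / 4) (by positivity)
  obtain ⟨q, htq, hqt⟩ := exists_rat_btwn (lt_add_of_pos_right t hδ)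
  have hq : (q : ℝ) ∈ S := Or.inl ⟨q, rfl⟩
  have hvq : v q - v t < ε / 4 :=
    (le_abs_self _).trans_lt (hvδ (by rw [Real.dist_eq, abs_of_pos (by linarith)]; linarith))
  have hnear : ∀ᶠ k in atTop, dist (f (φ₁ (φ₂ k)) t) (g ⟨q, hq⟩) < ε / 2 := by
    filter_upwards [((hv q).comp hφ₂.tendsto_atTop).sub ((hv t).comp hφ₂.tendsto_atTop)
        |>.eventually (gt_mem_nhds hvq),
      (hg ⟨q, hq⟩).eventually (Metric.ball_mem_nhds _ (by positivity : 0 < ε / 4))]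
      with k hVk hfk
    calc dist (f (φ₁ (φ₂ k)) t) (g ⟨q, hq⟩)
        ≤ dist (f (φ₁ (φ₂ k)) t) (f (φ₁ (φ₂ k)) q) + dist (f (φ₁ (φ₂ k)) q) (g ⟨q, hq⟩) :=
          dist_triangle _ _ _
      _ < ε / 4 + ε / 4 := add_lt_add_of_le_of_lt ((hfV _ _ _ htq.le).trans hVk.le) hfk
      _ = ε / 2 := by ring
  obtain ⟨k₀, hk₀⟩ := eventually_atTop.1 hnear
  exact ⟨k₀, fun m hm n hn => (dist_triangle_right _ _ _).trans_lt
    (by linarith [hk₀ m hm, hk₀ n hn])⟩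

noncomputable def discIndex (τ : ℝ) (N : ℕ) (t : ℝ) : ℕ :=
  min N ⌊t / τ⌋₊

theorem discInterp_eq {X : Type*} (pts : ℕ → X) (τ : ℝ) (N : ℕ) (t : ℝ) :
    discInterp pts τ N t = pts (discIndex τ N t) := rfl

theorem monotone_discIndex {τ : ℝ} (hτ : 0 < τ) (N : ℕ) : Monotone (discIndex τ N) :=
  fun _ _ hst => min_le_min_left N (Nat.floor_mono (div_le_div_of_nonneg_right hst hτ.le))

theorem discIndex_le (τ : ℝ) (N : ℕ) (t : ℝ) : discIndex τ N t ≤ N :=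
  min_le_left _ _

@[simp]
theorem discIndex_zero (τ : ℝ) (N : ℕ) : discIndex τ N 0 = 0 := by
  simp [discIndex]

section Interpolant

variable {X : Type*} [NormedAddCommGroup X] {Ψ : X → ℝ} {pts : ℕ → X} {τ : ℝ} {N : ℕ}

noncomputable def discDiss (Ψ : X → ℝ) (pts : ℕ → X) (τ : ℝ) (N : ℕ) (t : ℝ) : ℝ :=
  ∑ i ∈ Finset.range (discIndex τ N t), Ψ (pts (i + 1) - pts i)

theorem discDiss_nonneg (hΨnn : ∀ v, 0 ≤ Ψ v) (t : ℝ) : 0 ≤ discDiss Ψ pts τ N t :=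
  Finset.sum_nonneg fun _ _ => hΨnn _

theorem monotone_discDiss (hΨnn : ∀ v, 0 ≤ Ψ v) (hτ : 0 < τ) : Monotone (discDiss Ψ pts τ N) :=
  fun _ _ hst => Finset.sum_le_sum_of_subset_of_nonneg
    (Finset.range_subset_range.2 (monotone_discIndex hτ N hst)) fun _ _ _ => hΨnn _

theorem map_sub_discInterp_le [NormedSpace ℝ X] (hΨconv : ConvexOn ℝ univ Ψ)
    (hΨhom : ∀ c : ℝ, 0 ≤ c → ∀ v : X, Ψ (c • v) = c * Ψ v) (hτ : 0 < τ) {s t : ℝ} (hst : s ≤ t) :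
    Ψ (discInterp pts τ N t - discInterp pts τ N s)
      ≤ discDiss Ψ pts τ N t - discDiss Ψ pts τ N s := by
  rw [discInterp_eq, discInterp_eq, discDiss, discDiss,
    ← Finset.sum_Ico_eq_sub _ (monotone_discIndex hτ N hst)]
  exact map_sub_le_sum_Ico hΨconv hΨhom _ (monotone_discIndex hτ N hst)

end Interpolant

theorem IsDiscreteSol.sum_le_energy_mul_exp {X : Type*} [NormedAddCommGroup X]
    {E Et : ℝ → X → ℝ} {Ψ : X → ℝ} {x₀ : X} {T lam ε τ : ℝ} {N : ℕ} {pts : ℕ → X}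
    (hEnn : ∀ t ∈ Icc 0 T, ∀ x, 0 ≤ E t x)
    (hEt : ∀ x, ∀ t ∈ Icc 0 T, HasDerivWithinAt (fun s => E s x) (Et t x) (Icc 0 T) t)
    (hEbound : ∀ t ∈ Icc 0 T, ∀ x, |Et t x| ≤ lam * E t x) (hlam : 0 ≤ lam)
    (hΨ0 : Ψ 0 = 0) (hΨnn : ∀ v, 0 ≤ Ψ v) (hε : 0 ≤ ε) (hτ : 0 < τ) (hNT : N * τ ≤ T)
    (hsol : IsDiscreteSol E Ψ x₀ ε τ N pts) {j : ℕ} (hj : j ≤ N) :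
    ∑ i ∈ Finset.range j, Ψ (pts (i + 1) - pts i) ≤ E 0 x₀ * Real.exp (lam * T) := by
  have htime : ∀ i ≤ N, (i : ℝ) * τ ∈ Icc 0 T := fun i hi =>
    ⟨by positivity, (mul_le_mul_of_nonneg_right (Nat.cast_le.2 hi) hτ.le).trans hNT⟩
  have hstep : ∀ i < j, E ((i + 1 : ℕ) * τ) (pts (i + 1)) + Ψ (pts (i + 1) - pts i)
      ≤ Real.exp (lam * τ) * E (i * τ) (pts i) := by
    intro i hi
    have hsub : Icc ((i : ℝ) * τ) ((i + 1 : ℕ) * τ) ⊆ Icc 0 T :=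
      Icc_subset_Icc (htime i (by omega)).1 (htime (i + 1) (by omega)).2
    have hmin := (hsol.2 (i + 1) (by omega) (by omega)).2 (pts i) (by simpa using hε)
    have hgronwall := le_mul_exp_of_hasDerivWithinAt (f := fun s => E s (pts i))
      (fun s hs => (hEt _ s (hsub hs)).mono hsub)
      (fun s hs => (le_abs_self _).trans (hEbound s (hsub hs) _)) _
      (right_mem_Icc.2 (by push_cast; nlinarith))
    simp only [Nat.add_sub_cancel, sub_self, hΨ0, add_zero] at hmin
    calc _ ≤ E ((i + 1 : ℕ) * τ) (pts i) := hmin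
      _ ≤ _ := hgronwall
      _ = _ := by push_cast; ring_nf
  have hpow : Real.exp (lam * τ) ^ j ≤ Real.exp (lam * T) := by
    rw [← Real.exp_nat_mul, ← mul_assoc, mul_comm (j : ℝ), mul_assoc]
    exact Real.exp_le_exp.2 (mul_le_mul_of_nonneg_left (htime j hj).2 hlam)
  have hsum := add_sum_le_pow_mul (e := fun i => E (i * τ) (pts i))
    (Real.one_le_exp (mul_nonneg hlam hτ.le)) (fun i => hΨnn (pts (i + 1) - pts i)) hstep
  have h0 := hEnn 0 (by simpa using htime 0 (Nat.zero_le N)) x₀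
  simp only [Nat.cast_zero, zero_mul, hsol.1] at hsum
  nlinarith [hEnn _ (htime j hj) (pts j)]

theorem stmt_5_general
    {X : Type*} [NormedAddCommGroup X] [NormedSpace ℝ X] [FiniteDimensional ℝ X]
    (T : ℝ)
    (E Et : ℝ → X → ℝ)
    (hEnn : ∀ t ∈ Set.Icc (0:ℝ) T, ∀ x : X, 0 ≤ E t x)
    (hEt : ∀ x : X, ∀ t ∈ Set.Icc (0:ℝ) T,
      HasDerivWithinAt (fun s => E s x) (Et t x) (Set.Icc 0 T) t)
    (lam : ℝ) (hlam : 0 ≤ lam)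
    (hEbound : ∀ s ∈ Set.Icc (0:ℝ) T, ∀ x : X, |Et s x| ≤ lam * E s x)
    (Ψ : X → ℝ) (hΨconv : ConvexOn ℝ Set.univ Ψ)
    (hΨhom : ∀ c : ℝ, 0 ≤ c → ∀ v : X, Ψ (c • v) = c * Ψ v)
    (hΨpos : ∀ v : X, v ≠ 0 → 0 < Ψ v)
    (x₀ : X) (ε : ℝ) (hε : 0 < ε)
    (τ : ℕ → ℝ) (hτpos : ∀ n, 0 < τ n)
    (N : ℕ → ℕ) (hNT : ∀ n, (N n : ℝ) * τ n ≤ T ∧ T < ((N n : ℝ) + 1) * τ n)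
    (pts : ℕ → ℕ → X) (hsol : ∀ n, IsDiscreteSol E Ψ x₀ ε (τ n) (N n) (pts n)) :
    ∃ φ : ℕ → ℕ, StrictMono φ ∧ ∃ xe : ℝ → X,
      (∀ t ∈ Set.Icc (0:ℝ) T,
        Filter.Tendsto (fun k => discInterp (pts (φ k)) (τ (φ k)) (N (φ k)) t)
          Filter.atTop (nhds (xe t))) ∧
      BddAbove (dissSums (fun v : X => ‖v‖) xe 0 T) ∧
      ∀ S ∈ dissSums Ψ xe 0 T, S ≤ E 0 x₀ * Real.exp (lam * T) := by
  obtain ⟨c, hc, hcΨ⟩ := exists_pos_mul_norm_le_of_convexOn hΨconv hΨhom hΨpos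
  have hΨnn : ∀ v, 0 ≤ Ψ v := fun v => (by positivity : 0 ≤ c * ‖v‖).trans (hcΨ v)
  set M := E 0 x₀ * Real.exp (lam * T)
  let x : ℕ → ℝ → X := fun n => discInterp (pts n) (τ n) (N n)
  have hx0 : ∀ n, x n 0 = x₀ := fun n => by simp [x, discInterp_eq, (hsol n).1]
  have hD_mem : ∀ n t, discDiss Ψ (pts n) (τ n) (N n) t ∈ Icc 0 M := fun n t =>
    ⟨discDiss_nonneg hΨnn t, (hsol n).sum_le_energy_mul_exp hEnn hEt hEbound hlam
      (map_zero_of_posHomogeneous hΨhom) hΨnn hε.le (hτpos n) (hNT n).1 (discIndex_le _ _ _)⟩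
  let V : ℕ → ℝ → ℝ := fun n t => discDiss Ψ (pts n) (τ n) (N n) t / c
  have hV_mem : ∀ n t, V n t ∈ Icc 0 (M / c) := fun n t =>
    ⟨div_nonneg (hD_mem n t).1 hc.le, div_le_div_of_nonneg_right (hD_mem n t).2 hc.le⟩
  have hdist : ∀ n s t, s ≤ t → dist (x n s) (x n t) ≤ V n t - V n s := fun n s t hst => by
    rw [← sub_div, le_div_iff₀ hc, dist_comm, dist_eq_norm, mul_comm]
    exact (hcΨ _).trans (map_sub_discInterp_le hΨconv hΨhom (hτpos n) hst)
  have hx_mem : ∀ n t, x n t ∈ Metric.closedBall x₀ (M / c) := fun n t => by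
    simpa [hx0] using dist_le_of_dist_le_sub (hV_mem n) (hdist n) t 0
  obtain ⟨φ, hφ, xe, hxe⟩ := exists_subseq_tendsto_of_dist_le_sub
    (isCompact_closedBall x₀ (M / c)) hx_mem
    (fun n => (monotone_discDiss hΨnn (hτpos n)).div_const hc.le) hV_mem hdist
  have hdiss : ∀ S ∈ dissSums Ψ xe 0 T, S ≤ M :=
    le_of_mem_dissSums_of_tendsto (continuousOn_univ.1 (hΨconv.continuousOn isOpen_univ))
      (fun t _ => hxe t) fun k S hS =>
        (le_sub_of_mem_dissSums (fun s t => map_sub_discInterp_le hΨconv hΨhom (hτpos (φ k)))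
          hS).trans (by linarith [(hD_mem (φ k) T).2, (hD_mem (φ k) 0).1])
  exact ⟨φ, hφ, xe, fun t _ => hxe t, bddAbove_dissSums_of_le_mul (inv_nonneg.2 hc.le)
    (fun v => by rw [inv_mul_eq_div, le_div_iff₀ hc, mul_comm]; exact hcΨ v) hdiss, hdiss⟩

theorem stmt_5
    {X : Type*} [NormedAddCommGroup X] [NormedSpace ℝ X] [FiniteDimensional ℝ X]
    [Nontrivial X]
    (T : ℝ) (hT : 0 < T)
    (E Et : ℝ → X → ℝ) (DE : ℝ → X → X →L[ℝ] ℝ)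
    (hEnn : ∀ t ∈ Set.Icc (0:ℝ) T, ∀ x : X, 0 ≤ E t x)
    (hEt : ∀ x : X, ∀ t ∈ Set.Icc (0:ℝ) T,
      HasDerivWithinAt (fun s => E s x) (Et t x) (Set.Icc 0 T) t)
    (hDE : ∀ t ∈ Set.Icc (0:ℝ) T, ∀ x : X, HasFDerivAt (fun y => E t y) (DE t x) x)
    (hEtc : ContinuousOn (fun p : ℝ × X => Et p.1 p.2) (Set.Icc 0 T ×ˢ Set.univ))
    (hDEc : ContinuousOn (fun p : ℝ × X => DE p.1 p.2) (Set.Icc 0 T ×ˢ Set.univ))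
    (lam : ℝ) (hlam : 0 ≤ lam)
    (hEbound : ∀ s ∈ Set.Icc (0:ℝ) T, ∀ x : X, |Et s x| ≤ lam * E s x)
    (Ψ : X → ℝ) (hΨnn : ∀ v, 0 ≤ Ψ v) (hΨconv : ConvexOn ℝ Set.univ Ψ)
    (hΨhom : ∀ c : ℝ, 0 ≤ c → ∀ v : X, Ψ (c • v) = c * Ψ v)
    (hΨpos : ∀ v : X, v ≠ 0 → 0 < Ψ v)
    (x₀ : X) (ε : ℝ) (hε : 0 < ε)
    (τ : ℕ → ℝ) (hτpos : ∀ n, 0 < τ n) (hτ0 : Filter.Tendsto τ Filter.atTop (nhds 0))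
    (N : ℕ → ℕ) (hNT : ∀ n, (N n : ℝ) * τ n ≤ T ∧ T < ((N n : ℝ) + 1) * τ n)
    (pts : ℕ → ℕ → X) (hsol : ∀ n, IsDiscreteSol E Ψ x₀ ε (τ n) (N n) (pts n)) :
    ∃ φ : ℕ → ℕ, StrictMono φ ∧ ∃ xe : ℝ → X,
      (∀ t ∈ Set.Icc (0:ℝ) T,
        Filter.Tendsto (fun k => discInterp (pts (φ k)) (τ (φ k)) (N (φ k)) t)
          Filter.atTop (nhds (xe t))) ∧
      BddAbove (dissSums (fun v : X => ‖v‖) xe 0 T) ∧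
      ∀ S ∈ dissSums Ψ xe 0 T, S ≤ E 0 x₀ * Real.exp (lam * T) :=
  stmt_5_general T E Et hEnn hEt lam hlam hEbound Ψ hΨconv hΨhom hΨpos x₀ ε hε τ hτpos N hNT pts
    hsol
end

section
/- Fix ε > 0, a sequence τ_n → 0⁺, discretized solutions x^{ε,τ_n} with common initial datum x₀, and suppose x^{ε,τ_n}(t) → x^ε(t) as n → ∞ for every t ∈ [0,T]. Then for all 0 ≤ s ≤ t ≤ T: E(t, x^ε(t)) − E(s, x^ε(s)) ≤ ∫_s^t ∂_t E(r, x^ε(r)) dr − Diss_Ψ(x^ε;[s,t]). -/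
open Filter MeasureTheory Set
open scoped Topology NNReal

/-!
On a time step the discrete state is constant, so along it the energy changes exactly by the
integral of `∂ₜE`; at a grid time, comparing the minimizer with the previous state gives
`E(tᵢ, xᵢ) + Ψ(xᵢ - xᵢ₋₁) ≤ E(tᵢ, xᵢ₋₁)`. With the subadditivity of `Ψ`, every interpolant
therefore satisfies the energy-dissipation inequality between any two times. Gronwall's lemma
bounds `E`, hence `∂ₜE`, uniformly along the interpolants, so by dominated convergence this
two-point inequality passes to the pointwise limit; summing it over a partition bounds every
partition sum of `Diss_Ψ`.
-/
section Subadditive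

variable {X : Type*} [AddCommGroup X]

lemma map_add_le_of_convexOn_of_homogeneous [Module ℝ X] {Ψ : X → ℝ} (hconv : ConvexOn ℝ univ Ψ)
    (hhom : ∀ c : ℝ, 0 ≤ c → ∀ v : X, Ψ (c • v) = c * Ψ v) (a b : X) :
    Ψ (a + b) ≤ Ψ a + Ψ b := by
  have hmid := hconv.2 (mem_univ a) (mem_univ b) (by norm_num : (0:ℝ) ≤ 1/2)
    (by norm_num : (0:ℝ) ≤ 1/2) (by norm_num)
  have hab : a + b = (2:ℝ) • ((1/2 : ℝ) • a + (1/2 : ℝ) • b) := by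
    rw [smul_add, smul_smul, smul_smul]; norm_num
  rw [hab, hhom 2 (by norm_num)]
  simp only [smul_eq_mul] at hmid
  linarith

lemma map_sub_le_sub_of_forall_step_le {Ψ : X → ℝ} (h0 : Ψ 0 = 0)
    (hadd : ∀ a b : X, Ψ (a + b) ≤ Ψ a + Ψ b) {w : ℕ → X} {W : ℕ → ℝ} {k m : ℕ} (hkm : k ≤ m)
    (hstep : ∀ i, k ≤ i → i < m → Ψ (w (i + 1) - w i) ≤ W (i + 1) - W i) :
    Ψ (w m - w k) ≤ W m - W k := by
  induction m, hkm using Nat.le_induction with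
  | base => simp [h0]
  | succ m hkm ih =>
    calc Ψ (w (m + 1) - w k) = Ψ ((w (m + 1) - w m) + (w m - w k)) := by abel_nf
      _ ≤ Ψ (w (m + 1) - w m) + Ψ (w m - w k) := hadd _ _
      _ ≤ (W (m + 1) - W m) + (W m - W k) :=
        add_le_add (hstep m hkm m.lt_succ_self) (ih fun i hki him => hstep i hki (by omega))
      _ = W (m + 1) - W k := by ring

end Subadditive

lemma Fin.sum_sub_castSucc {M : Type*} [AddCommGroup M] {n : ℕ} (f : Fin (n + 1) → M) :
    ∑ i : Fin n, (f i.succ - f i.castSucc) = f (Fin.last n) - f 0 := by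
  induction n with
  | zero => simp
  | succ n ih =>
    rw [Fin.sum_univ_castSucc]
    simp only [Fin.succ_castSucc]
    rw [ih (fun i => f i.castSucc), Fin.succ_last, Fin.castSucc_zero]
    abel

section Dissipation

variable {X : Type*} [NormedAddCommGroup X]

lemma dissSums_nonempty (Ψ : X → ℝ) (u : ℝ → X) {s t : ℝ} (hst : s ≤ t) :
    (dissSums Ψ u s t).Nonempty := by
  rcases hst.eq_or_lt with rfl | hlt
  · exact ⟨0, 0, fun _ => s, fun i j hij => by omega, rfl, rfl, by simp⟩
  · exact ⟨_, 1, ![s, t], Fin.strictMono_iff_lt_succ.2 (by simpa using hlt), rfl, rfl, rfl⟩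

lemma dissTV_le_sub {Ψ : X → ℝ} {u : ℝ → X} {V : ℝ → ℝ} {s t : ℝ} (hst : s ≤ t)
    (h : ∀ a b, s ≤ a → a ≤ b → b ≤ t → Ψ (u b - u a) ≤ V b - V a) :
    dissTV Ψ u s t ≤ V t - V s := by
  refine csSup_le (dissSums_nonempty Ψ u hst) ?_
  rintro _ ⟨n, σ, hσ, hσ0, hσn, rfl⟩
  have hmem : ∀ j, σ j ∈ Icc s t := fun j =>
    ⟨hσ0 ▸ hσ.monotone (Fin.zero_le j), hσn ▸ hσ.monotone (Fin.le_last j)⟩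
  calc ∑ i : Fin n, Ψ (u (σ i.succ) - u (σ i.castSucc))
      ≤ ∑ i : Fin n, (V (σ i.succ) - V (σ i.castSucc)) :=
        Finset.sum_le_sum fun i _ => h _ _ (hmem _).1
          (hσ.monotone (Fin.castSucc_le_succ i)) (hmem _).2
    _ = V t - V s := by rw [Fin.sum_sub_castSucc (fun i => V (σ i)), hσ0, hσn]

end Dissipation

lemma integral_eq_sub_of_hasDerivWithinAt_Icc {f f' : ℝ → ℝ} {p q a b : ℝ}
    (hf : ∀ r ∈ Icc p q, HasDerivWithinAt f (f' r) (Icc p q) r) (hf' : ContinuousOn f' (Icc p q))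
    (hpa : p ≤ a) (hab : a ≤ b) (hbq : b ≤ q) : ∫ r in a..b, f' r = f b - f a := by
  have hsub : Icc a b ⊆ Icc p q := Icc_subset_Icc hpa hbq
  refine intervalIntegral.integral_eq_sub_of_hasDeriv_right_of_le hab
    (fun r hr => (hf r (hsub hr)).continuousWithinAt.mono hsub) (fun r hr => ?_)
    ((hf'.mono hsub).intervalIntegrable_of_Icc hab)
  exact ((hf r (hsub (Ioo_subset_Icc_self hr))).hasDerivAt
    (Icc_mem_nhds (hpa.trans_lt hr.1) (hr.2.trans_le hbq))).hasDerivWithinAt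

lemma le_mul_exp_of_abs_deriv_le {f f' : ℝ → ℝ} {p q a b lam : ℝ}
    (hf : ∀ r ∈ Icc p q, HasDerivWithinAt f (f' r) (Icc p q) r)
    (hnn : ∀ r ∈ Icc p q, 0 ≤ f r) (hbd : ∀ r ∈ Icc p q, |f' r| ≤ lam * f r)
    (hpa : p ≤ a) (hab : a ≤ b) (hbq : b ≤ q) : f b ≤ f a * Real.exp (lam * (b - a)) := by
  have hsub : Icc a b ⊆ Icc p q := Icc_subset_Icc hpa hbq
  have hsub' : Ico a b ⊆ Icc p q := Ico_subset_Icc_self.trans hsub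
  have key := norm_le_gronwallBound_of_norm_deriv_right_le (f' := f') (ε := 0)
    (fun r hr => (hf r (hsub hr)).continuousWithinAt.mono hsub)
    (fun r hr => (hf r (hsub' hr)).mono_of_mem_nhdsWithin
      (Icc_mem_nhdsGE_of_mem ⟨hpa.trans hr.1, hr.2.trans_le hbq⟩))
    le_rfl
    (fun r hr => by
      simpa [abs_of_nonneg (hnn r (hsub' hr))] using hbd r (hsub' hr))
    b ⟨hab, le_rfl⟩
  simpa [gronwallBound_ε0, abs_of_nonneg (hnn a (hsub ⟨le_rfl, hab⟩)),
    abs_of_nonneg (hnn b (hsub ⟨hab, le_rfl⟩))] using key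

lemma integrableOn_Icc_of_abs_le {f : ℝ → ℝ} {p q B : ℝ}
    (hf : AEStronglyMeasurable f (volume.restrict (Icc p q))) (hB : ∀ r ∈ Icc p q, |f r| ≤ B) :
    IntegrableOn f (Icc p q) :=
  Integrable.of_bound hf B ((ae_restrict_iff' measurableSet_Icc).2 (ae_of_all _ hB))

lemma integrableOn_Icc_of_tendsto {F : ℕ → ℝ → ℝ} {f : ℝ → ℝ} {p q B : ℝ}
    (hF : ∀ n, AEStronglyMeasurable (F n) (volume.restrict (Icc p q)))
    (hB : ∀ n, ∀ r ∈ Icc p q, |F n r| ≤ B)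
    (hlim : ∀ r ∈ Icc p q, Tendsto (fun n => F n r) atTop (𝓝 (f r))) :
    IntegrableOn f (Icc p q) :=
  integrableOn_Icc_of_abs_le
    (aestronglyMeasurable_of_tendsto_ae atTop hF
      ((ae_restrict_iff' measurableSet_Icc).2 (ae_of_all _ hlim)))
    fun r hr => le_of_tendsto' ((continuous_abs.tendsto _).comp (hlim r hr)) fun n => hB n r hr

lemma ContinuousOn.aestronglyMeasurable_comp_Icc {X : Type*} [TopologicalSpace X]
    [MeasurableSpace X] [OpensMeasurableSpace X] [SecondCountableTopology X]
    {g : ℝ → X → ℝ} {p q : ℝ} (hpq : p ≤ q)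
    (hg : ContinuousOn (fun z : ℝ × X => g z.1 z.2) (Icc p q ×ˢ univ)) {u : ℝ → X}
    (hu : AEStronglyMeasurable u (volume.restrict (Icc p q))) :
    AEStronglyMeasurable (fun r => g r (u r)) (volume.restrict (Icc p q)) := by
  have hext : Continuous fun z : ℝ × X => g (projIcc p q hpq z.1) z.2 :=
    hg.comp_continuous (f := fun z : ℝ × X => ((projIcc p q hpq z.1 : ℝ), z.2))
      (((continuous_projIcc (h := hpq)).comp continuous_fst).subtype_val.prodMk continuous_snd)
      fun z => ⟨Subtype.mem _, mem_univ _⟩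
  refine (hext.comp_aestronglyMeasurable (aestronglyMeasurable_id.prodMk hu)).congr ?_
  refine (ae_restrict_iff' measurableSet_Icc).2 (ae_of_all _ fun r hr => ?_)
  simp [projIcc_of_mem hpq hr]

noncomputable def stepIndex (N : ℕ) (τ t : ℝ) : ℕ := min N ⌊t / τ⌋₊

section StepIndex

variable {N i : ℕ} {τ r t : ℝ}

lemma stepIndex_le (N : ℕ) (τ t : ℝ) : stepIndex N τ t ≤ N := min_le_left _ _

lemma stepIndex_mono (hτ : 0 < τ) : Monotone (stepIndex N τ) := fun _ _ h =>
  min_le_min le_rfl (Nat.floor_le_floor (div_le_div_of_nonneg_right h hτ.le))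

lemma stepIndex_mul_le (hτ : 0 < τ) (ht : 0 ≤ t) : (stepIndex N τ t : ℝ) * τ ≤ t := by
  have hfl : (stepIndex N τ t : ℝ) ≤ t / τ :=
    (Nat.cast_le.2 (min_le_right _ _)).trans (Nat.floor_le (div_nonneg ht hτ.le))
  exact (le_div_iff₀ hτ).1 hfl

lemma le_stepIndex (hτ : 0 < τ) (hi : i ≤ N) (h : i * τ ≤ t) : i ≤ stepIndex N τ t :=
  le_min hi (Nat.le_floor ((le_div_iff₀ hτ).2 h))

lemma stepIndex_natCast_mul (hτ : 0 < τ) (hi : i ≤ N) : stepIndex N τ (i * τ) = i := by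
  simp [stepIndex, hτ.ne', hi]

lemma stepIndex_eq_of_le (hτ : 0 < τ) (h : stepIndex N τ t * τ ≤ r) (hrt : r ≤ t) :
    stepIndex N τ r = stepIndex N τ t :=
  le_antisymm (stepIndex_mono hτ hrt) (le_stepIndex hτ (stepIndex_le N τ t) h)

lemma stepIndex_eq_of_mem_Ico (hτ : 0 < τ) (hi : i ≤ N) (hr : r ∈ Ico (i * τ) ((i + 1) * τ)) :
    stepIndex N τ r = i := by
  refine le_antisymm ((min_le_right _ _).trans (Nat.le_of_lt_succ ?_)) (le_stepIndex hτ hi hr.1)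
  have hr0 : 0 ≤ r := (mul_nonneg i.cast_nonneg hτ.le).trans hr.1
  exact (Nat.floor_lt (div_nonneg hr0 hτ.le)).2 (by push_cast; exact (div_lt_iff₀ hτ).2 hr.2)

lemma measurable_stepIndex : Measurable (stepIndex N τ) :=
  measurable_const.min (Nat.measurable_floor.comp (measurable_id.div_const τ))

end StepIndex

section EnergyDissipation

variable {X : Type*} [NormedAddCommGroup X] {E Et : ℝ → X → ℝ} {Ψ : X → ℝ}

def EnergyDissipationIneqOn (E Et : ℝ → X → ℝ) (Ψ : X → ℝ) (u : ℝ → X) (p q : ℝ) : Prop :=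
  ∀ a b, p ≤ a → a ≤ b → b ≤ q →
    Ψ (u b - u a) ≤ (∫ r in a..b, Et r (u r)) + E a (u a) - E b (u b)

lemma EnergyDissipationIneqOn.dissTV_le {u : ℝ → X} {p q s t : ℝ}
    (h : EnergyDissipationIneqOn E Et Ψ u p q) (hint : IntegrableOn (fun r => Et r (u r)) (Icc p q))
    (hps : p ≤ s) (hst : s ≤ t) (htq : t ≤ q) :
    E t (u t) - E s (u s) ≤ (∫ r in s..t, Et r (u r)) - dissTV Ψ u s t := by
  have hii : ∀ a ∈ Icc s t, IntervalIntegrable (fun r => Et r (u r)) volume s a := fun a ha =>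
    (hint.mono_set (uIcc_subset_Icc ⟨hps, hst.trans htq⟩
      ⟨hps.trans ha.1, ha.2.trans htq⟩)).intervalIntegrable
  have hdiss := dissTV_le_sub (Ψ := Ψ) (u := u)
    (V := fun a => (∫ r in s..a, Et r (u r)) - E a (u a)) hst fun a b hsa hab hbt => by
      have hsplit := intervalIntegral.integral_interval_sub_left (hii b ⟨hsa.trans hab, hbt⟩)
        (hii a ⟨hsa, hab.trans hbt⟩)
      linarith [h a b (hps.trans hsa) hab (hbt.trans htq)]
  simp only [intervalIntegral.integral_same] at hdiss
  linarith

lemma EnergyDissipationIneqOn.of_tendsto {u : ℕ → ℝ → X} {v : ℝ → X} {p q B : ℝ}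
    (hedi : ∀ n, EnergyDissipationIneqOn E Et Ψ (u n) p q)
    (hu : ∀ r ∈ Icc p q, Tendsto (fun n => u n r) atTop (𝓝 (v r)))
    (hrate : ∀ r ∈ Icc p q, Tendsto (fun n => Et r (u n r)) atTop (𝓝 (Et r (v r))))
    (hmeas : ∀ n, AEStronglyMeasurable (fun r => Et r (u n r)) (volume.restrict (Icc p q)))
    (hbd : ∀ n, ∀ r ∈ Icc p q, |Et r (u n r)| ≤ B)
    (hE : ∀ r ∈ Icc p q, Continuous (E r)) (hΨ : Continuous Ψ) :
    EnergyDissipationIneqOn E Et Ψ v p q := by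
  intro a b hpa hab hbq
  have ha : a ∈ Icc p q := ⟨hpa, hab.trans hbq⟩
  have hb : b ∈ Icc p q := ⟨hpa.trans hab, hbq⟩
  have hsub : uIoc a b ⊆ Icc p q := by
    rw [uIoc_of_le hab]; exact Ioc_subset_Icc_self.trans (Icc_subset_Icc hpa hbq)
  have hI : Tendsto (fun n => ∫ r in a..b, Et r (u n r)) atTop (𝓝 (∫ r in a..b, Et r (v r))) :=
    intervalIntegral.tendsto_integral_filter_of_dominated_convergence (fun _ => B)
      (Eventually.of_forall fun n => (hmeas n).mono_measure (Measure.restrict_mono hsub le_rfl))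
      (Eventually.of_forall fun n => ae_of_all _ fun r hr => hbd n r (hsub hr))
      intervalIntegrable_const (ae_of_all _ fun r hr => hrate r (hsub hr))
  have hdiss : Tendsto (fun n => Ψ (u n b - u n a)) atTop (𝓝 (Ψ (v b - v a))) :=
    (hΨ.tendsto _).comp ((hu b hb).sub (hu a ha))
  have hEa := ((hE a ha).tendsto _).comp (hu a ha)
  have hEb := ((hE b hb).tendsto _).comp (hu b hb)
  exact le_of_tendsto_of_tendsto' hdiss ((hI.add hEa).sub hEb)
    fun n => hedi n a b hpa hab hbq

end EnergyDissipation

namespace IsDiscreteSol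

variable {X : Type*} [NormedAddCommGroup X] {E Et : ℝ → X → ℝ} {Ψ : X → ℝ} {x₀ : X}
  {ε τ T : ℝ} {N : ℕ} {pts : ℕ → X}

lemma energy_step_le (hsol : IsDiscreteSol E Ψ x₀ ε τ N pts) (hε : 0 ≤ ε) (hΨ0 : Ψ 0 = 0)
    {i : ℕ} (hi : i < N) :
    E ((i + 1 : ℕ) * τ) (pts (i + 1)) + Ψ (pts (i + 1) - pts i) ≤ E ((i + 1 : ℕ) * τ) (pts i) := by
  have hmin := (hsol.2 (i + 1) (by omega) hi).2 (pts i) (by simpa using hε)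
  simpa only [Nat.add_sub_cancel, sub_self, hΨ0, add_zero] using hmin

lemma energy_discInterp_le {lam : ℝ} (hsol : IsDiscreteSol E Ψ x₀ ε τ N pts) (hε : 0 ≤ ε)
    (hτ : 0 < τ) (hNT : N * τ ≤ T) (hΨ0 : Ψ 0 = 0) (hΨnn : ∀ v, 0 ≤ Ψ v)
    (hEt : ∀ x, ∀ r ∈ Icc 0 T, HasDerivWithinAt (fun s => E s x) (Et r x) (Icc 0 T) r)
    (hEnn : ∀ r ∈ Icc 0 T, ∀ x, 0 ≤ E r x) (hEbound : ∀ r ∈ Icc 0 T, ∀ x, |Et r x| ≤ lam * E r x)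
    {r : ℝ} (hr : r ∈ Icc 0 T) : E r (discInterp pts τ N r) ≤ E 0 x₀ * Real.exp (lam * r) := by
  have hprop : ∀ x a b, 0 ≤ a → a ≤ b → b ≤ T → E a x ≤ E 0 x₀ * Real.exp (lam * a) →
      E b x ≤ E 0 x₀ * Real.exp (lam * b) := fun x a b ha hab hb hEa =>
    calc E b x ≤ E a x * Real.exp (lam * (b - a)) :=
          le_mul_exp_of_abs_deriv_le (hEt x) (fun r hr => hEnn r hr x)
            (fun r hr => hEbound r hr x) ha hab hb
      _ ≤ E 0 x₀ * Real.exp (lam * a) * Real.exp (lam * (b - a)) := by gcongr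
      _ = E 0 x₀ * Real.exp (lam * b) := by rw [mul_assoc, ← Real.exp_add]; ring_nf
  have hgrid : ∀ i ≤ N, E (i * τ) (pts i) ≤ E 0 x₀ * Real.exp (lam * (i * τ)) := by
    intro i hi
    induction i with
    | zero => simp [hsol.1]
    | succ i ih =>
      have hstep := hsol.energy_step_le hε hΨ0 hi
      have hiτ : (i : ℝ) * τ ≤ (i + 1 : ℕ) * τ := by gcongr; omega
      have hT : ((i + 1 : ℕ) : ℝ) * τ ≤ T := le_trans (by gcongr) hNT
      have hprev := hprop (pts i) _ _ (by positivity) hiτ hT (ih (by omega))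
      linarith [hΨnn (pts (i + 1) - pts i)]
  have hk := stepIndex_mul_le (N := N) hτ hr.1
  exact hprop _ _ r (by positivity) hk hr.2 (hgrid _ (stepIndex_le N τ r))

lemma energyDissipationIneqOn_discInterp (hsol : IsDiscreteSol E Ψ x₀ ε τ N pts) (hε : 0 ≤ ε)
    (hτ : 0 < τ) (hNT : N * τ ≤ T) (hΨ0 : Ψ 0 = 0) (hΨadd : ∀ a b : X, Ψ (a + b) ≤ Ψ a + Ψ b)
    (hEt : ∀ x, ∀ r ∈ Icc 0 T, HasDerivWithinAt (fun s => E s x) (Et r x) (Icc 0 T) r)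
    (hEtc : ∀ x, ContinuousOn (fun r => Et r x) (Icc 0 T))
    (hint : IntegrableOn (fun r => Et r (discInterp pts τ N r)) (Icc 0 T)) :
    EnergyDissipationIneqOn E Et Ψ (discInterp pts τ N) 0 T := by
  set u := discInterp pts τ N
  -- `V` is constant on each time step and increases by at least `Ψ (pts (i + 1) - pts i)`
  -- at the grid time `(i + 1) * τ`.
  set V : ℝ → ℝ := fun a => (∫ r in (0:ℝ)..a, Et r (u r)) - E a (u a)
  have hV : ∀ a b, a ∈ Icc 0 T → b ∈ Icc 0 T →
      V b - V a = (∫ r in a..b, Et r (u r)) - E b (u b) + E a (u a) := by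
    intro a b ha hb
    have hii : ∀ c ∈ Icc 0 T, IntervalIntegrable (fun r => Et r (u r)) volume 0 c := fun c hc =>
      (hint.mono_set (uIcc_subset_Icc ⟨le_rfl, hc.1.trans hc.2⟩ hc)).intervalIntegrable
    have := intervalIntegral.integral_interval_sub_left (hii b hb) (hii a ha)
    simp only [V]
    linarith
  have hconst : ∀ c d x, 0 ≤ c → c ≤ d → d ≤ T → EqOn u (fun _ => x) (Ioo c d) →
      ∫ r in c..d, Et r (u r) = E d x - E c x := fun c d x hc hcd hd hux => by
    rw [intervalIntegral.integral_congr_Ioo_of_le (g := fun r => Et r x) hcd fun r hr => by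
      simp only [hux hr]]
    exact integral_eq_sub_of_hasDerivWithinAt_Icc (hEt x) (hEtc x) hc hcd hd
  have hgrid : ∀ a ∈ Icc 0 T, V a = V (stepIndex N τ a * τ) := by
    intro a ha
    set k := stepIndex N τ a
    have hk := stepIndex_mul_le (N := N) hτ ha.1
    have hk0 : (0 : ℝ) ≤ k * τ := by positivity
    have huk : ∀ r, k * τ ≤ r → r ≤ a → u r = pts k := fun r h1 h2 =>
      congrArg pts (stepIndex_eq_of_le hτ h1 h2)
    have hdiff := hV _ _ ⟨hk0, hk.trans ha.2⟩ ha
    rw [hconst _ _ (pts k) hk0 hk ha.2 fun r hr => huk r hr.1.le hr.2.le, huk a hk le_rfl,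
      huk _ le_rfl hk] at hdiff
    linarith
  have hstep : ∀ i, i < N → Ψ (pts (i + 1) - pts i) ≤ V ((i + 1 : ℕ) * τ) - V (i * τ) := by
    intro i hi
    have hi0 : (0 : ℝ) ≤ i * τ := by positivity
    have hii1 : (i : ℝ) * τ ≤ (i + 1 : ℕ) * τ := by gcongr; omega
    have hi1T : ((i + 1 : ℕ) : ℝ) * τ ≤ T := le_trans (by gcongr; omega) hNT
    have hui : u (i * τ) = pts i := congrArg pts (stepIndex_natCast_mul hτ hi.le)
    have hui1 : u ((i + 1 : ℕ) * τ) = pts (i + 1) := congrArg pts (stepIndex_natCast_mul hτ hi)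
    have hdiff := hV _ _ ⟨hi0, hii1.trans hi1T⟩ ⟨hi0.trans hii1, hi1T⟩
    rw [hconst _ _ (pts i) hi0 hii1 hi1T fun r hr =>
      congrArg pts (stepIndex_eq_of_mem_Ico hτ hi.le ⟨hr.1.le, by push_cast at hr; exact hr.2⟩),
      hui, hui1] at hdiff
    linarith [hsol.energy_step_le hε hΨ0 hi]
  intro a b ha hab hb
  have hIcc_a : a ∈ Icc 0 T := ⟨ha, hab.trans hb⟩
  have hIcc_b : b ∈ Icc 0 T := ⟨ha.trans hab, hb⟩
  have := map_sub_le_sub_of_forall_step_le hΨ0 hΨadd (w := pts) (W := fun i => V (i * τ))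
    (stepIndex_mono hτ hab) fun i _ hi => hstep i (hi.trans_le (stepIndex_le N τ b))
  change Ψ (u b - u a) ≤ V (stepIndex N τ b * τ) - V (stepIndex N τ a * τ) at this
  rw [← hgrid a hIcc_a, ← hgrid b hIcc_b] at this
  linarith [hV a b hIcc_a hIcc_b]

end IsDiscreteSol

theorem stmt_9_general
    {X : Type*} [NormedAddCommGroup X] [NormedSpace ℝ X] [FiniteDimensional ℝ X]
    (T : ℝ)
    (E Et : ℝ → X → ℝ) (DE : ℝ → X → X →L[ℝ] ℝ)
    (hEnn : ∀ t ∈ Set.Icc (0:ℝ) T, ∀ x : X, 0 ≤ E t x)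
    (hEt : ∀ x : X, ∀ t ∈ Set.Icc (0:ℝ) T,
      HasDerivWithinAt (fun s => E s x) (Et t x) (Set.Icc 0 T) t)
    (hDE : ∀ t ∈ Set.Icc (0:ℝ) T, ∀ x : X, HasFDerivAt (fun y => E t y) (DE t x) x)
    (hEtc : ContinuousOn (fun p : ℝ × X => Et p.1 p.2) (Set.Icc 0 T ×ˢ Set.univ))
    (lam : ℝ) (hlam : 0 ≤ lam)
    (hEbound : ∀ s ∈ Set.Icc (0:ℝ) T, ∀ x : X, |Et s x| ≤ lam * E s x)
    (Ψ : X → ℝ) (hΨnn : ∀ v, 0 ≤ Ψ v) (hΨconv : ConvexOn ℝ Set.univ Ψ)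
    (hΨhom : ∀ c : ℝ, 0 ≤ c → ∀ v : X, Ψ (c • v) = c * Ψ v)
    (x₀ : X) (ε : ℝ) (hε : 0 < ε)
    (τ : ℕ → ℝ) (hτpos : ∀ n, 0 < τ n)
    (N : ℕ → ℕ) (hNT : ∀ n, (N n : ℝ) * τ n ≤ T ∧ T < ((N n : ℝ) + 1) * τ n)
    (pts : ℕ → ℕ → X) (hsol : ∀ n, IsDiscreteSol E Ψ x₀ ε (τ n) (N n) (pts n))
    (xe : ℝ → X)
    (hconv : ∀ t ∈ Set.Icc (0:ℝ) T,
      Filter.Tendsto (fun n => discInterp (pts n) (τ n) (N n) t) Filter.atTop (nhds (xe t))) :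
    ∀ s t : ℝ, 0 ≤ s → s ≤ t → t ≤ T →
      E t (xe t) - E s (xe s) ≤
        (∫ r in s..t, Et r (xe r)) - dissTV Ψ xe s t := by
  intro s t hs hst ht
  borelize X
  have hT : 0 ≤ T := hs.trans (hst.trans ht)
  have hΨ0 : Ψ 0 = 0 := by simpa using hΨhom 0 le_rfl 0
  set u := fun n => discInterp (pts n) (τ n) (N n)
  set B := lam * (E 0 x₀ * Real.exp (lam * T))
  have hbd : ∀ n, ∀ r ∈ Icc 0 T, |Et r (u n r)| ≤ B := fun n r hr => by
    have hE := (hsol n).energy_discInterp_le hε.le (hτpos n) (hNT n).1 hΨ0 hΨnn hEt hEnn hEbound hr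
    refine (hEbound r hr _).trans (mul_le_mul_of_nonneg_left (hE.trans ?_) hlam)
    gcongr
    exacts [hEnn 0 ⟨le_rfl, hT⟩ x₀, hr.2]
  have hmeas : ∀ n, AEStronglyMeasurable (fun r => Et r (u n r)) (volume.restrict (Icc 0 T)) :=
    fun n => hEtc.aestronglyMeasurable_comp_Icc hT
      (measurable_from_nat.comp measurable_stepIndex).aestronglyMeasurable
  have hrate : ∀ r ∈ Icc 0 T, Tendsto (fun n => Et r (u n r)) atTop (𝓝 (Et r (xe r))) :=
    fun r hr => (hEtc (r, xe r) ⟨hr, mem_univ _⟩).tendsto.comp <| tendsto_nhdsWithin_iff.2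
      ⟨tendsto_const_nhds.prodMk_nhds (hconv r hr), .of_forall fun _ => ⟨hr, mem_univ _⟩⟩
  have hedi : EnergyDissipationIneqOn E Et Ψ xe 0 T :=
    EnergyDissipationIneqOn.of_tendsto
      (fun n => (hsol n).energyDissipationIneqOn_discInterp hε.le (hτpos n) (hNT n).1 hΨ0
        (map_add_le_of_convexOn_of_homogeneous hΨconv hΨhom) hEt
        (fun x => hEtc.comp (continuous_id.prodMk continuous_const).continuousOn
          fun r hr => ⟨hr, mem_univ x⟩)
        (integrableOn_Icc_of_abs_le (hmeas n) (hbd n)))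
      hconv hrate hmeas hbd
      (fun r hr => continuous_iff_continuousAt.2 fun x => (hDE r hr x).continuousAt)
      (continuousOn_univ.1 (hΨconv.continuousOn isOpen_univ))
  exact hedi.dissTV_le (integrableOn_Icc_of_tendsto hmeas hbd hrate) hs hst ht

theorem stmt_9
    {X : Type*} [NormedAddCommGroup X] [NormedSpace ℝ X] [FiniteDimensional ℝ X]
    [Nontrivial X]
    (T : ℝ) (hT : 0 < T)
    (E Et : ℝ → X → ℝ) (DE : ℝ → X → X →L[ℝ] ℝ)
    (hEnn : ∀ t ∈ Set.Icc (0:ℝ) T, ∀ x : X, 0 ≤ E t x)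
    (hEt : ∀ x : X, ∀ t ∈ Set.Icc (0:ℝ) T,
      HasDerivWithinAt (fun s => E s x) (Et t x) (Set.Icc 0 T) t)
    (hDE : ∀ t ∈ Set.Icc (0:ℝ) T, ∀ x : X, HasFDerivAt (fun y => E t y) (DE t x) x)
    (hEtc : ContinuousOn (fun p : ℝ × X => Et p.1 p.2) (Set.Icc 0 T ×ˢ Set.univ))
    (hDEc : ContinuousOn (fun p : ℝ × X => DE p.1 p.2) (Set.Icc 0 T ×ˢ Set.univ))
    (lam : ℝ) (hlam : 0 ≤ lam)
    (hEbound : ∀ s ∈ Set.Icc (0:ℝ) T, ∀ x : X, |Et s x| ≤ lam * E s x)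
    (Ψ : X → ℝ) (hΨnn : ∀ v, 0 ≤ Ψ v) (hΨconv : ConvexOn ℝ Set.univ Ψ)
    (hΨhom : ∀ c : ℝ, 0 ≤ c → ∀ v : X, Ψ (c • v) = c * Ψ v)
    (hΨpos : ∀ v : X, v ≠ 0 → 0 < Ψ v)
    (x₀ : X) (ε : ℝ) (hε : 0 < ε)
    (τ : ℕ → ℝ) (hτpos : ∀ n, 0 < τ n) (hτ0 : Filter.Tendsto τ Filter.atTop (nhds 0))
    (N : ℕ → ℕ) (hNT : ∀ n, (N n : ℝ) * τ n ≤ T ∧ T < ((N n : ℝ) + 1) * τ n)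
    (pts : ℕ → ℕ → X) (hsol : ∀ n, IsDiscreteSol E Ψ x₀ ε (τ n) (N n) (pts n))
    (xe : ℝ → X)
    (hconv : ∀ t ∈ Set.Icc (0:ℝ) T,
      Filter.Tendsto (fun n => discInterp (pts n) (τ n) (N n) t) Filter.atTop (nhds (xe t))) :
    ∀ s t : ℝ, 0 ≤ s → s ≤ t → t ≤ T →
      E t (xe t) - E s (xe s) ≤
        (∫ r in s..t, Et r (xe r)) - dissTV Ψ xe s t :=
  stmt_9_general T E Et DE hEnn hEt hDE hEtc lam hlam hEbound Ψ hΨnn hΨconv hΨhom x₀ ε hε τ hτpos N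
    hNT pts hsol xe hconv
end
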